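/- Let M be a module over the algebra k𝔾_a = k[u_0,u_1,…]/(u_0^p,u_1^p,…) such that for every m ∈ M only finitely many of the elements v_j act nontrivially on m (i.e., v_j(m) = 0 for all but finitely many j). Then the map Δ_M : M → M ⊗ k[T] defined by Δ_M(m) = Σ_j v_j(m) ⊗ T^j is a well-defined right k[T]-comodule structure on M (i.e., a rational 𝔾_a-module structure) whose induced k𝔾_a-action is the given one. Conversely, every rational 𝔾_a-module satisfies this finiteness condition. -/

import Mathlib

/-!
A `k`-linear map `ρ : M → M ⊗ k[T]` amounts to the family of its coefficient maps
`v_j = vAct ρ j`, subject only to the condition that for each `m` almost all `v_j m` vanish: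
`M ⊗ k[T] ≅ ℕ →₀ M`. Comparing coefficients of `T^i ⊗ T^j`, and using
`Δ(T^n) = Σ C(n,a) T^a ⊗ T^(n-a)`, coassociativity becomes `v_i v_j = C(i+j,i) v_(i+j)` and the
counit axiom becomes `v_0 = 1`. Both hold in `k𝔾ₐ`: when adding `i` and `j` in base `p` has no
carry, the digit factorials combine to `C(i+j,i)` by Lucas' theorem; a carry at digit `l` kills
the left side since `u_l^p = 0` and the right side by Kummer's theorem.
-/

noncomputable section

open TensorProduct Polynomial

variable (k : Type) [Field k]

def gaComul : k[X] →ₐ[k] k[X] ⊗[k] k[X] :=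
  aeval ((X : k[X]) ⊗ₜ[k] (1 : k[X]) + (1 : k[X]) ⊗ₜ[k] (X : k[X]))

def gaCounit : k[X] →ₐ[k] k := aeval 0

variable {k}

def IsGaComodule {M : Type} [AddCommGroup M] [Module k M]
    (ρ : M →ₗ[k] M ⊗[k] k[X]) : Prop :=
  (∀ m, (TensorProduct.assoc k M (Polynomial k) (Polynomial k))
        (LinearMap.rTensor (Polynomial k) ρ (ρ m)) =
      LinearMap.lTensor M (gaComul k).toLinearMap (ρ m)) ∧
  (∀ m, (TensorProduct.rid k M) (LinearMap.lTensor M (gaCounit k).toLinearMap (ρ m)) = m)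

def vAct {M : Type} [AddCommGroup M] [Module k M]
    (ρ : M →ₗ[k] M ⊗[k] k[X]) (j : ℕ) : M →ₗ[k] M :=
  (TensorProduct.rid k M).toLinearMap ∘ₗ LinearMap.lTensor M (lcoeff k j) ∘ₗ ρ

variable (k)

/-- The group algebra `k𝔾ₐ = k[u₀,u₁,…]/(u₀^p, u₁^p, …)`. -/
abbrev kGaAlg (p : ℕ) : Type :=
  MvPolynomial ℕ k ⧸ Ideal.span (Set.range fun i : ℕ => (MvPolynomial.X i : MvPolynomial ℕ k) ^ p)

/-- the `i`-th digit of `j` in base `p` -/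
def digit (p j i : ℕ) : ℕ := (Nat.digits p j).getD i 0

/-- The element `v_j = u₀^{j₀} ⋯ u_{r-1}^{j_{r-1}} / (j₀! ⋯ j_{r-1}!)` of `k𝔾ₐ`,
where `j = Σ jₗ pˡ` is the base-`p` expansion. -/
def vElt (p j : ℕ) : kGaAlg k p :=
  Ideal.Quotient.mk _
    ((∏ i ∈ Finset.range (j + 1), ((Nat.factorial (digit p j i) : k))⁻¹) •
      ∏ i ∈ Finset.range (j + 1), MvPolynomial.X i ^ (digit p j i))

section Digits

variable {p : ℕ}

theorem digit_eq_div_pow_mod (hp : 2 ≤ p) (j i : ℕ) : digit p j i = j / p ^ i % p :=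
  Nat.getD_digits j i hp

theorem digit_eq_zero_of_lt (hp : 2 ≤ p) {j i : ℕ} (h : j < i) : digit p j i = 0 := by
  rw [digit_eq_div_pow_mod hp, Nat.div_eq_of_lt (h.trans (Nat.lt_pow_self hp)), Nat.zero_mod]

theorem digit_add_of_forall_digit_add_lt (hp : 2 ≤ p) {i j : ℕ}
    (h : ∀ l, digit p i l + digit p j l < p) (l : ℕ) :
    digit p (i + j) l = digit p i l + digit p j l := by
  simp only [digit_eq_div_pow_mod hp] at h ⊢
  induction l generalizing i j with
  | zero =>
    simpa [Nat.add_mod] using Nat.mod_eq_of_lt (h 0)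
  | succ l ih =>
    have hsucc (n e : ℕ) : n / p ^ (e + 1) = n / p / p ^ e := by
      rw [Nat.div_div_eq_div_mul, pow_succ']
    simp only [hsucc] at ih ⊢
    rw [Nat.add_div_eq_of_add_mod_lt (by simpa using h 0)]
    exact ih fun l' => by simpa only [hsucc] using h (l' + 1)

theorem prime_dvd_choose_of_le_digit_add [Fact p.Prime] {i j l : ℕ}
    (h : p ≤ digit p i l + digit p j l) : p ∣ (i + j).choose i := by
  have hp : 2 ≤ p := Nat.Prime.two_le Fact.out
  rw [digit_eq_div_pow_mod hp, digit_eq_div_pow_mod hp] at h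
  have hcarry : p ^ (l + 1) ≤ i % p ^ (l + 1) + j % p ^ (l + 1) := by
    rw [Nat.mod_pow_succ, Nat.mod_pow_succ, pow_succ]
    nlinarith [Nat.zero_le (i % p ^ l), Nat.zero_le (j % p ^ l), pow_pos (by omega : 0 < p) l]
  have hbound : Nat.log p (j + i) < max (Nat.log p (j + i) + 1) (l + 2) := by omega
  have hmult := Nat.Prime.emultiplicity_choose' (n := j) (k := i) Fact.out hbound
  rw [add_comm j] at hmult
  by_contra hndvd
  rw [emultiplicity_eq_zero.mpr hndvd, eq_comm, Nat.cast_eq_zero, Finset.card_eq_zero,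
    Finset.filter_eq_empty_iff] at hmult
  exact hmult (by simp only [Finset.mem_Ico]; omega) hcarry

end Digits

section GroupAlgebra

variable {k} {p : ℕ}

theorem mk_prod_X_pow_eq_zero {s : Finset ℕ} {e : ℕ → ℕ} {l : ℕ} (hl : l ∈ s) (hle : p ≤ e l) :
    (Ideal.Quotient.mk _ (∏ i ∈ s, MvPolynomial.X i ^ e i) : kGaAlg k p) = 0 := by
  rw [Ideal.Quotient.eq_zero_iff_mem, ← Finset.mul_prod_erase _ _ hl, ← Nat.add_sub_cancel' hle,
    pow_add, mul_assoc]
  exact Ideal.mul_mem_right _ _ (Ideal.subset_span ⟨l, rfl⟩)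

theorem vElt_eq_of_lt (hp : 2 ≤ p) {j N : ℕ} (h : j < N) :
    vElt k p j = (∏ i ∈ Finset.range N, ((digit p j i).factorial : k)⁻¹) •
      Ideal.Quotient.mk _ (∏ i ∈ Finset.range N, MvPolynomial.X i ^ digit p j i) := by
  have hsub : Finset.range (j + 1) ⊆ Finset.range N := Finset.range_subset_range.mpr h
  have hzero (i : ℕ) (hi : i ∉ Finset.range (j + 1)) : digit p j i = 0 :=
    digit_eq_zero_of_lt hp (by simpa [Nat.lt_succ_iff] using hi)
  rw [vElt, ← Finset.prod_subset hsub (fun i _ hi => by simp [hzero i hi]),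
    ← Finset.prod_subset hsub (fun i _ hi => by simp [hzero i hi])]
  exact map_smul (Ideal.Quotient.mkₐ k _) _ _

theorem vElt_zero : vElt k p 0 = 1 := by
  simp [vElt, digit]

variable [Fact p.Prime] [CharP k p]

theorem natCast_choose_eq_prod_digit {n i N : ℕ} (hn : n < N) (hi : i ≤ n) :
    (n.choose i : k) = ∏ l ∈ Finset.range N, ((digit p n l).choose (digit p i l) : k) := by
  have hp : 2 ≤ p := Nat.Prime.two_le Fact.out
  have hnN : n < p ^ N := hn.trans (Nat.lt_pow_self hp)
  simp only [digit_eq_div_pow_mod hp]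
  rw [← Nat.cast_prod, CharP.natCast_eq_natCast k p]
  exact Choose.choose_modEq_prod_range_choose_nat hnN (hi.trans_lt hnN)

theorem inv_factorial_mul_inv_factorial {a b : ℕ} (h : a + b < p) :
    (a.factorial : k)⁻¹ * (b.factorial : k)⁻¹ =
      ((a + b).choose a : k) * ((a + b).factorial : k)⁻¹ := by
  have hne {n : ℕ} (hn : n < p) : (n.factorial : k) ≠ 0 := by
    rw [Ne, CharP.cast_eq_zero_iff k p, Nat.Prime.dvd_factorial Fact.out]
    omega
  have hfac : ((a + b).choose a : k) * a.factorial * b.factorial = (a + b).factorial := by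
    rw [← Nat.cast_mul, ← Nat.cast_mul, Nat.choose_symm_add,
      Nat.add_choose_mul_factorial_mul_factorial]
  field_simp [hne h, hne (show a < p by omega), hne (show b < p by omega)]
  rw [← hfac]
  ring

theorem vElt_mul_vElt (i j : ℕ) :
    vElt k p i * vElt k p j = ((i + j).choose i : k) • vElt k p (i + j) := by
  have hp : 2 ≤ p := Nat.Prime.two_le Fact.out
  have hN : i + j < i + j + 1 := Nat.lt_succ_self _
  rw [vElt_eq_of_lt hp (show i < i + j + 1 by omega), vElt_eq_of_lt hp (show j < i + j + 1 by omega),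
    vElt_eq_of_lt hp hN, smul_mul_smul_comm, ← map_mul, ← Finset.prod_mul_distrib,
    ← Finset.prod_mul_distrib]
  simp only [← pow_add]
  by_cases hcarry : ∃ l, p ≤ digit p i l + digit p j l
  · obtain ⟨l, hl⟩ := hcarry
    have hlN : l ∈ Finset.range (i + j + 1) := by
      by_contra hl'
      simp only [Finset.mem_range, not_lt] at hl'
      rw [digit_eq_zero_of_lt hp (by omega), digit_eq_zero_of_lt hp (by omega)] at hl
      omega
    rw [mk_prod_X_pow_eq_zero hlN hl, smul_zero,
      (CharP.cast_eq_zero_iff k p _).mpr (prime_dvd_choose_of_le_digit_add hl), zero_smul]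
  · push Not at hcarry
    have hdigit := digit_add_of_forall_digit_add_lt hp hcarry
    rw [natCast_choose_eq_prod_digit hN (Nat.le_add_right i j), ← mul_smul]
    simp only [hdigit, inv_factorial_mul_inv_factorial (hcarry _), Finset.prod_mul_distrib]

end GroupAlgebra

section Coefficients

open Finset.HasAntidiagonal

variable {k}

variable (k) in
def coeffEquiv (N : Type) [AddCommGroup N] [Module k N] : N ⊗[k] k[X] ≃ₗ[k] ℕ →₀ N :=
  TensorProduct.equivFinsuppOfBasisRight (basisMonomials k)

variable {N N' : Type} [AddCommGroup N] [Module k N] [AddCommGroup N'] [Module k N']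

@[simp]
theorem coeffEquiv_tmul (n : N) (f : k[X]) (j : ℕ) :
    coeffEquiv k N (n ⊗ₜ f) j = f.coeff j • n :=
  TensorProduct.equivFinsuppOfBasisRight_apply_tmul_apply _ _ _ _

theorem coeffEquiv_apply (t : N ⊗[k] k[X]) (j : ℕ) :
    coeffEquiv k N t j = TensorProduct.rid k N (LinearMap.lTensor N (lcoeff k j) t) :=
  TensorProduct.equivFinsuppOfBasisRight_apply _ _ _

theorem coeffEquiv_symm_apply (f : ℕ →₀ N) :
    (coeffEquiv k N).symm f = f.sum fun j n => n ⊗ₜ ((X : k[X]) ^ j) := by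
  simp [coeffEquiv, monomial_one_right_eq_X_pow]

theorem finsum_coeffEquiv_tmul_X_pow (t : N ⊗[k] k[X]) :
    ∑ᶠ j, coeffEquiv k N t j ⊗ₜ ((X : k[X]) ^ j) = t := by
  conv_rhs => rw [← (coeffEquiv k N).symm_apply_apply t, coeffEquiv_symm_apply]
  refine finsum_eq_sum_of_support_subset _ fun j hj => ?_
  simp only [Function.mem_support, Finset.mem_coe, Finsupp.mem_support_iff] at hj ⊢
  exact fun h => hj (by rw [h, zero_tmul])

theorem coeffEquiv_rTensor (f : N →ₗ[k] N') (t : N ⊗[k] k[X]) (j : ℕ) :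
    coeffEquiv k N' (LinearMap.rTensor k[X] f t) j = f (coeffEquiv k N t j) := by
  induction t with
  | zero => simp
  | tmul n g => simp
  | add t u ht hu => simp [ht, hu]

theorem rid_lTensor_gaCounit (t : N ⊗[k] k[X]) :
    TensorProduct.rid k N (LinearMap.lTensor N (gaCounit k).toLinearMap t) = coeffEquiv k N t 0 := by
  have hcounit : (gaCounit k).toLinearMap = lcoeff k 0 :=
    LinearMap.ext fun f => (coeff_zero_eq_aeval_zero f).symm
  rw [hcounit, coeffEquiv_apply]

theorem gaComul_X_pow (d : ℕ) :
    gaComul k ((X : k[X]) ^ d) =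
      ∑ m ∈ antidiagonal d, (d.choose m.1 : k) • (((X : k[X]) ^ m.1) ⊗ₜ ((X : k[X]) ^ m.2)) := by
  have hcomm : Commute ((X : k[X]) ⊗ₜ[k] (1 : k[X])) ((1 : k[X]) ⊗ₜ[k] (X : k[X])) := by
    simp [Commute, SemiconjBy, Algebra.TensorProduct.tmul_mul_tmul]
  rw [map_pow, gaComul, aeval_X, hcomm.add_pow']
  refine Finset.sum_congr rfl fun m _ => ?_
  rw [Algebra.TensorProduct.tmul_pow, Algebra.TensorProduct.tmul_pow,
    Algebra.TensorProduct.tmul_mul_tmul, one_pow, one_pow, mul_one, one_mul, Nat.cast_smul_eq_nsmul]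

theorem coeffEquiv_coeffEquiv_lTensor_gaComul (t : N ⊗[k] k[X]) (i j : ℕ) :
    coeffEquiv k N (coeffEquiv k (N ⊗[k] k[X])
        ((TensorProduct.assoc k N k[X] k[X]).symm
          (LinearMap.lTensor N (gaComul k).toLinearMap t)) j) i =
      ((i + j).choose i : k) • coeffEquiv k N t (i + j) := by
  induction t with
  | zero => simp
  | add t u ht hu => simp [ht, hu]
  | tmul n f =>
    induction f using Polynomial.induction_on' with
    | add f g hf hg => simp only [tmul_add, map_add, Finsupp.add_apply, hf, hg, smul_add]
    | monomial d a =>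
      rw [← smul_X_eq_monomial, ← smul_tmul, LinearMap.lTensor_tmul, AlgHom.toLinearMap_apply,
        gaComul_X_pow, tmul_sum]
      simp only [tmul_smul, map_sum, map_smul, assoc_symm_tmul, Finsupp.coe_finsetSum,
        Finsupp.coe_smul, Finset.sum_apply, Pi.smul_apply, coeffEquiv_tmul, coeff_X_pow, ite_smul,
        one_smul, zero_smul, smul_ite, smul_zero]
      split_ifs with hd
      · subst hd
        rw [Finset.sum_eq_single (i, j)]
        · simp
        · rintro ⟨c₁, c₂⟩ hc hne
          rw [mem_antidiagonal] at hc
          split_ifs with hc₂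
          · have hc₁ : i ≠ c₁ := fun h => hne (by simp_all)
            simp [coeff_X_pow, hc₁]
          · simp
        · simp
      · refine Finset.sum_eq_zero fun c hc => ?_
        rw [mem_antidiagonal] at hc
        split_ifs with hc₂
        · have hc₁ : i ≠ c.1 := by omega
          simp [coeff_X_pow, hc₁]
        · simp

end Coefficients

section Comodule

variable {k} {M : Type} [AddCommGroup M] [Module k M]

theorem vAct_apply (ρ : M →ₗ[k] M ⊗[k] k[X]) (j : ℕ) (m : M) :
    vAct ρ j m = coeffEquiv k M (ρ m) j :=
  (coeffEquiv_apply _ _).symm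

theorem finite_setOf_vAct_ne_zero (ρ : M →ₗ[k] M ⊗[k] k[X]) (m : M) :
    {j | vAct ρ j m ≠ 0}.Finite := by
  simp only [vAct_apply]
  exact (coeffEquiv k M (ρ m)).hasFiniteSupport

theorem isGaComodule_of_vAct {ρ : M →ₗ[k] M ⊗[k] k[X]} (h0 : ∀ m, vAct ρ 0 m = m)
    (hmul : ∀ i j m, vAct ρ i (vAct ρ j m) = ((i + j).choose i : k) • vAct ρ (i + j) m) :
    IsGaComodule ρ := by
  refine ⟨fun m => ?_, fun m => by rw [rid_lTensor_gaCounit, ← vAct_apply, h0]⟩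
  rw [← LinearEquiv.eq_symm_apply]
  refine (coeffEquiv k _).injective <| Finsupp.ext fun j =>
    (coeffEquiv k M).injective <| Finsupp.ext fun i => ?_
  rw [coeffEquiv_rTensor, coeffEquiv_coeffEquiv_lTensor_gaComul, ← vAct_apply, ← vAct_apply,
    ← vAct_apply, hmul]

variable {p : ℕ} [Module (kGaAlg k p) M] [IsScalarTower k (kGaAlg k p) M]

def gaCoaction (hfin : ∀ m : M, {j | vElt k p j • m ≠ 0}.Finite) : M →ₗ[k] M ⊗[k] k[X] :=
  (coeffEquiv k M).symm.toLinearMap ∘ₗ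
    { toFun := fun m => Finsupp.ofSupportFinite (fun j => vElt k p j • m) (hfin m)
      map_add' := fun m m' => Finsupp.ext fun _ => smul_add _ m m'
      map_smul' := fun c m => Finsupp.ext fun _ => smul_comm _ c m }

theorem vAct_gaCoaction (hfin : ∀ m : M, {j | vElt k p j • m ≠ 0}.Finite) (j : ℕ) (m : M) :
    vAct (gaCoaction hfin) j m = vElt k p j • m := by
  rw [vAct_apply, gaCoaction, LinearMap.comp_apply, LinearEquiv.coe_coe,
    LinearEquiv.apply_symm_apply]
  rfl

end Comodule

theorem statement0 (p : ℕ) [Fact p.Prime] [CharP k p]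
    {M : Type} [AddCommGroup M] [Module k M] [Module (kGaAlg k p) M]
    [IsScalarTower k (kGaAlg k p) M] :
    ((∀ m : M, {j : ℕ | vElt k p j • m ≠ 0}.Finite) →
      ∃ ρ : M →ₗ[k] M ⊗[k] k[X],
        (∀ m : M, ρ m = ∑ᶠ j : ℕ, (vElt k p j • m) ⊗ₜ[k] ((X : k[X]) ^ j)) ∧
        IsGaComodule ρ ∧
        (∀ (j : ℕ) (m : M), vAct ρ j m = vElt k p j • m)) ∧
    (∀ (M' : Type) (_ : AddCommGroup M') (_ : Module k M')
        (ρ' : M' →ₗ[k] M' ⊗[k] k[X]), IsGaComodule ρ' →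
        ∀ m' : M', {j : ℕ | vAct ρ' j m' ≠ 0}.Finite) := by
  refine ⟨fun hfin => ⟨gaCoaction hfin, fun m => ?_, isGaComodule_of_vAct (fun m => ?_)
    (fun i j m => ?_), vAct_gaCoaction hfin⟩, fun M' _ _ ρ' _ => finite_setOf_vAct_ne_zero ρ'⟩
  · simp only [← vAct_gaCoaction hfin, vAct_apply]
    exact (finsum_coeffEquiv_tmul_X_pow _).symm
  · rw [vAct_gaCoaction, vElt_zero, one_smul]
  · rw [vAct_gaCoaction, vAct_gaCoaction, vAct_gaCoaction, smul_smul, vElt_mul_vElt, smul_assoc]
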